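/- Let S be a set, f : S → Y and g : S → Z functions with (f, g) : S → Y × Z surjective. Define ideals I_A and I_C of the power set of S: I_A is generated by {f⁻¹(A) : A ∈ 𝒜} and I_C by {g⁻¹(C) : C ∈ 𝒞}, where 𝒜 ⊆ 𝒫(Y) and 𝒞 ⊆ 𝒫(Z) are downward-closed families. Then for any U ⊆ Y and V ⊆ Z: f⁻¹(U) ∩ g⁻¹(V) belongs to the ideal I_A ⊔ I_C if and only if f⁻¹(U) ∈ I_A or g⁻¹(V) ∈ I_C. -/
import Mathlib


/-- An ideal of the power-set Boolean algebra of S. -/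
def IsSetIdeal {S : Type*} (I : Set (Set S)) : Prop :=
  I.Nonempty ∧ (∀ X Y, Y ∈ I → X ⊆ Y → X ∈ I) ∧ (∀ X Y, X ∈ I → Y ∈ I → X ∪ Y ∈ I)

/-- The smallest ideal of 𝒫(S) containing a family P. -/
def genIdeal {S : Type*} (P : Set (Set S)) : Set (Set S) :=
  {X | ∀ K : Set (Set S), IsSetIdeal K → P ⊆ K → X ∈ K}

/-- The smallest ideal containing two ideals. -/
def joinIdeal {S : Type*} (I J : Set (Set S)) : Set (Set S) :=
  {X | ∀ K : Set (Set S), IsSetIdeal K → I ⊆ K → J ⊆ K → X ∈ K}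

lemma empty_mem_ideal {S : Type*} {I : Set (Set S)} (hI : IsSetIdeal I) : (∅ : Set S) ∈ I := by
  obtain ⟨⟨X, hX⟩, hdown, -⟩ := hI
  exact hdown ∅ X hX (Set.empty_subset X)

lemma isSetIdeal_gen {S : Type*} (P : Set (Set S)) : IsSetIdeal (genIdeal P) := by
  refine ⟨⟨∅, fun K hK _ => empty_mem_ideal hK⟩, ?_, ?_⟩
  · intro X Y hY hXY K hK hPK
    exact hK.2.1 X Y (hY K hK hPK) hXY
  · intro X Y hX hY K hK hPK
    exact hK.2.2 X Y (hX K hK hPK) (hY K hK hPK)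

lemma subset_gen {S : Type*} (P : Set (Set S)) : P ⊆ genIdeal P :=
  fun X hX K _ hPK => hPK hX

/-- Preimage of a member of the generated ideal on Y belongs to the ideal
generated by preimages. -/
lemma preimage_mem_gen {S Y : Type*} (f : S → Y) (𝒜 : Set (Set Y)) {A : Set Y}
    (hA : A ∈ genIdeal 𝒜) : f ⁻¹' A ∈ genIdeal {X | ∃ A' ∈ 𝒜, X = f ⁻¹' A'} := by
  set gI := genIdeal {X | ∃ A' ∈ 𝒜, X = f ⁻¹' A'}
  have hgI : IsSetIdeal gI := isSetIdeal_gen _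
  refine hA {B | f ⁻¹' B ∈ gI} ⟨⟨∅, ?_⟩, ?_, ?_⟩ ?_
  · simpa using empty_mem_ideal hgI
  · intro X Y' hY' hXY
    exact hgI.2.1 _ _ hY' (Set.preimage_mono hXY)
  · intro X Y' hX hY'
    have := hgI.2.2 _ _ hX hY'
    simpa [Set.preimage_union] using this
  · intro A' hA'
    exact subset_gen _ ⟨A', hA', rfl⟩

/-- Characterization of `genIdeal` of a preimage family. -/
lemma mem_gen_preimage_iff {S Y : Type*} (f : S → Y) (𝒜 : Set (Set Y)) (X : Set S) :
    X ∈ genIdeal {X | ∃ A' ∈ 𝒜, X = f ⁻¹' A'} ↔ ∃ A ∈ genIdeal 𝒜, X ⊆ f ⁻¹' A := by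
  constructor
  · intro hX
    refine hX {X | ∃ A ∈ genIdeal 𝒜, X ⊆ f ⁻¹' A} ⟨⟨∅, ∅, ?_, ?_⟩, ?_, ?_⟩ ?_
    · exact empty_mem_ideal (isSetIdeal_gen _)
    · simp
    · rintro X' Y' ⟨A, hA, hsub⟩ hXY
      exact ⟨A, hA, hXY.trans hsub⟩
    · rintro X' Y' ⟨A, hA, hsubA⟩ ⟨B, hB, hsubB⟩
      exact ⟨A ∪ B, (isSetIdeal_gen 𝒜).2.2 A B hA hB, by
        rw [Set.preimage_union]; exact Set.union_subset_union hsubA hsubB⟩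
    · rintro X' ⟨A, hA, rfl⟩
      exact ⟨A, subset_gen _ hA, le_refl _⟩
  · rintro ⟨A, hA, hsub⟩
    exact (isSetIdeal_gen _).2.1 _ _ (preimage_mem_gen f 𝒜 hA) hsub

/-- Abstract form of the key forking-transfer lemma: with (f,g) surjective onto
Y × Z and ideals generated by preimages from the two factors, a rectangle
f⁻¹(U) ∩ g⁻¹(V) lies in the join ideal iff one of its sides lies in the
corresponding ideal. -/
theorem stmt_18 {S Y Z : Type*} (f : S → Y) (g : S → Z)
    (hsurj : Function.Surjective (fun s => (f s, g s)))
    (𝒜 : Set (Set Y)) (𝒞 : Set (Set Z))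
    (h𝒜 : ∀ X Y', Y' ∈ 𝒜 → X ⊆ Y' → X ∈ 𝒜)
    (h𝒞 : ∀ X Y', Y' ∈ 𝒞 → X ⊆ Y' → X ∈ 𝒞)
    (U : Set Y) (V : Set Z) :
    f ⁻¹' U ∩ g ⁻¹' V ∈
        joinIdeal (genIdeal {X | ∃ A ∈ 𝒜, X = f ⁻¹' A})
          (genIdeal {X | ∃ C ∈ 𝒞, X = g ⁻¹' C}) ↔
      f ⁻¹' U ∈ genIdeal {X | ∃ A ∈ 𝒜, X = f ⁻¹' A} ∨
        g ⁻¹' V ∈ genIdeal {X | ∃ C ∈ 𝒞, X = g ⁻¹' C} := by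
  set IA := genIdeal {X | ∃ A ∈ 𝒜, X = f ⁻¹' A} with hIA
  set IC := genIdeal {X | ∃ C ∈ 𝒞, X = g ⁻¹' C} with hIC
  constructor
  · intro h
    -- the concrete ideal
    set K : Set (Set S) := {X | ∃ A ∈ genIdeal 𝒜, ∃ C ∈ genIdeal 𝒞, X ⊆ f ⁻¹' A ∪ g ⁻¹' C}
      with hK
    have hKid : IsSetIdeal K := by
      refine ⟨⟨∅, ∅, empty_mem_ideal (isSetIdeal_gen _), ∅,
          empty_mem_ideal (isSetIdeal_gen _), by simp⟩, ?_, ?_⟩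
      · rintro X X' ⟨A, hA, C, hC, hsub⟩ hXX'
        exact ⟨A, hA, C, hC, hXX'.trans hsub⟩
      · rintro X X' ⟨A, hA, C, hC, hsub⟩ ⟨A', hA', C', hC', hsub'⟩
        refine ⟨A ∪ A', (isSetIdeal_gen 𝒜).2.2 _ _ hA hA',
          C ∪ C', (isSetIdeal_gen 𝒞).2.2 _ _ hC hC', ?_⟩
        rw [Set.preimage_union, Set.preimage_union]
        intro s hs
        rcases hs with hs | hs
        · rcases hsub hs with h1 | h1
          · exact Or.inl (Or.inl h1)
          · exact Or.inr (Or.inl h1)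
        · rcases hsub' hs with h1 | h1
          · exact Or.inl (Or.inr h1)
          · exact Or.inr (Or.inr h1)
    have hIAK : IA ⊆ K := by
      intro X hX
      obtain ⟨A, hA, hsub⟩ := (mem_gen_preimage_iff f 𝒜 X).1 hX
      exact ⟨A, hA, ∅, empty_mem_ideal (isSetIdeal_gen _),
        hsub.trans (Set.subset_union_left)⟩
    have hICK : IC ⊆ K := by
      intro X hX
      obtain ⟨C, hC, hsub⟩ := (mem_gen_preimage_iff g 𝒞 X).1 hX
      exact ⟨∅, empty_mem_ideal (isSetIdeal_gen _), C, hC,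
        hsub.trans (Set.subset_union_right)⟩
    obtain ⟨A, hA, C, hC, hsub⟩ := h K hKid hIAK hICK
    have key : U ⊆ A ∨ V ⊆ C := by
      by_contra hcon
      rw [not_or, Set.not_subset, Set.not_subset] at hcon
      obtain ⟨⟨y, hyU, hyA⟩, ⟨z, hzV, hzC⟩⟩ := hcon
      obtain ⟨s, hs⟩ := hsurj (y, z)
      have hfs : f s = y := congrArg Prod.fst hs
      have hgs : g s = z := congrArg Prod.snd hs
      have : s ∈ f ⁻¹' A ∪ g ⁻¹' C :=
        hsub ⟨by simp [Set.mem_preimage, hfs, hyU], by simp [Set.mem_preimage, hgs, hzV]⟩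
      rcases this with h1 | h1
      · exact hyA (by rwa [Set.mem_preimage, hfs] at h1)
      · exact hzC (by rwa [Set.mem_preimage, hgs] at h1)
    rcases key with hUA | hVC
    · exact Or.inl ((mem_gen_preimage_iff f 𝒜 _).2 ⟨A, hA, Set.preimage_mono hUA⟩)
    · exact Or.inr ((mem_gen_preimage_iff g 𝒞 _).2 ⟨C, hC, Set.preimage_mono hVC⟩)
  · intro h K hKid hIAK hICK
    rcases h with h | h
    · exact hKid.2.1 _ _ (hIAK h) Set.inter_subset_left
    · exact hKid.2.1 _ _ (hICK h) Set.inter_subset_right
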